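/- arXiv:math/0409140 — 2 statements merged into one kernel-verified Lean document; each statement's English description precedes it below -/
import Mathlib

section
/- Let V be a vertex algebra, W a V-module, and let u ∈ E_r(V), w ∈ E_s(W) with r,s ∈ ℤ. Then u_n w ∈ E_{r+s-n-1}(W) for all n ∈ ℤ, and furthermore u_n w ∈ E_{r+s-n}(W) for all n ≥ 0. -/
open scoped DirectSum

noncomputable section


/-- Integer binomial coefficient `C(m, i)` for `m : ℤ`, `i : ℕ`. -/
def intBinom (m : ℤ) (i : ℕ) : ℤ :=
  (∏ j ∈ Finset.range i, (m - (j : ℤ))) / (i.factorial : ℤ)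

/-- A vertex algebra over `ℂ`: a complex vector space `V` with a vacuum vector and a
linear state-field correspondence `Y`, `Y(v,x) = ∑ₙ vₙ x^{-n-1}`, satisfying
truncation, vacuum and creation properties, and Borcherds' commutator and
iterate formulas. -/
structure VertexAlgebra (V : Type*) [AddCommGroup V] [Module ℂ V] where
  /-- the coefficients of vertex operators: `Y u n v = uₙ v`. -/
  Y : V →ₗ[ℂ] ℤ → Module.End ℂ V
  /-- the vacuum vector `𝟏`. -/
  vac : V
  trunc : ∀ u v : V, ∃ N : ℕ, ∀ n : ℤ, (N : ℤ) ≤ n → Y u n v = 0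
  vac_act : ∀ (n : ℤ) (v : V), Y vac n v = if n = -1 then v else 0
  create : ∀ u : V, Y u (-1) vac = u
  create_nonneg : ∀ (u : V) (n : ℤ), 0 ≤ n → Y u n vac = 0
  commutator : ∀ (u v w : V) (m n : ℤ),
    Y u m (Y v n w) - Y v n (Y u m w)
      = ∑ᶠ i : ℕ, intBinom m i • Y (Y u i v) (m + n - i) w
  iterate : ∀ (u v w : V) (m n : ℤ),
    Y (Y u m v) n w
      = ∑ᶠ i : ℕ, ((-1 : ℤ) ^ i * intBinom m i) •
          (Y u (m - i) (Y v (n + i) w)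
            - ((((-1 : ℤˣ) ^ m : ℤˣ) : ℤ) • Y v (m + n - i) (Y u i w)))

/-- A module for a vertex algebra. -/
structure VAModule {V : Type*} [AddCommGroup V] [Module ℂ V] (va : VertexAlgebra V)
    (W : Type*) [AddCommGroup W] [Module ℂ W] where
  /-- the action `act v n w = vₙ w`. -/
  act : V →ₗ[ℂ] ℤ → Module.End ℂ W
  trunc : ∀ (v : V) (w : W), ∃ N : ℕ, ∀ n : ℤ, (N : ℤ) ≤ n → act v n w = 0
  vac_act : ∀ (n : ℤ) (w : W), act va.vac n w = if n = -1 then w else 0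
  commutator : ∀ (u v : V) (w : W) (m n : ℤ),
    act u m (act v n w) - act v n (act u m w)
      = ∑ᶠ i : ℕ, intBinom m i • act (va.Y u i v) (m + n - i) w
  iterate : ∀ (u v : V) (w : W) (m n : ℤ),
    act (va.Y u m v) n w
      = ∑ᶠ i : ℕ, ((-1 : ℤ) ^ i * intBinom m i) •
          (act u (m - i) (act v (n + i) w)
            - ((((-1 : ℤˣ) ^ m : ℤˣ) : ℤ) • act v (m + n - i) (act u i w)))

variable {V : Type*} [AddCommGroup V] [Module ℂ V]

/-- The adjoint module of a vertex algebra. -/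
def VertexAlgebra.adjoint (va : VertexAlgebra V) : VAModule va V where
  act := va.Y
  trunc := va.trunc
  vac_act := va.vac_act
  commutator := va.commutator
  iterate := va.iterate

variable {W : Type*} [AddCommGroup W] [Module ℂ W]

/-- `Efilt M n = E_n(W)`: the subspace of `W` spanned by the vectors
`u⁽¹⁾_{-1-k₁} ⋯ u⁽ʳ⁾_{-1-k_r} w` for `r ≥ 1`, `u⁽ⁱ⁾ ∈ V`, `w ∈ W`, `kᵢ ≥ 0`,
`k₁ + ⋯ + k_r ≥ n`. -/
def Efilt {va : VertexAlgebra V} (M : VAModule va W) (n : ℤ) : Submodule ℂ W :=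
  Submodule.span ℂ {x : W | ∃ (L : List (V × ℕ)) (w : W), L ≠ [] ∧
    n ≤ (L.map fun p => ((p.2 : ℤ))).sum ∧
    x = L.foldr (fun p acc => M.act p.1 (-1 - (p.2 : ℤ)) acc) w}

/-- `Cfilt M n = C_n(W)`: the subspace of `W` spanned by the vectors `v_{-n} w`. -/
def Cfilt {va : VertexAlgebra V} (M : VAModule va W) (n : ℕ) : Submodule ℂ W :=
  Submodule.span ℂ {x : W | ∃ (v : V) (w : W), x = M.act v (-(n : ℤ)) w}

/-!
Both claims together say that `u_n` maps `E_r(V) × E_s(W)` into `E_{r+s-filtDrop n}(W)`.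
Since `E_s(W)` is spanned by words `b_{-1-k} y`, this is proved first for `u ∈ V = E_0(V)`
by induction on the word spanning `w`, moving `u_n` past `b_{-1-k}` with the commutator
formula, and then for a word `u = a_{-1-k} u'` spanning `E_r(V)` with the iterate formula.
The index bookkeeping only uses `n ≤ filtDrop n ≤ n + 1` and that `n - filtDrop n` is
antitone.
-/

def filtDrop (n : ℤ) : ℤ := if 0 ≤ n then n else n + 1

namespace VAModule

variable {va : VertexAlgebra V} (M : VAModule va W)

def actWord (L : List (V × ℕ)) (w : W) : W :=
  L.foldr (fun p acc => M.act p.1 (-1 - (p.2 : ℤ)) acc) w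

@[simp]
lemma actWord_nil (w : W) : M.actWord [] w = w := rfl

@[simp]
lemma actWord_cons (a : V) (k : ℕ) (L : List (V × ℕ)) (w : W) :
    M.actWord ((a, k) :: L) w = M.act a (-1 - (k : ℤ)) (M.actWord L w) := rfl

end VAModule

def wordWeight {α : Type*} (L : List (α × ℕ)) : ℤ := (L.map fun p => (p.2 : ℤ)).sum

@[simp]
lemma wordWeight_nil {α : Type*} : wordWeight ([] : List (α × ℕ)) = 0 := rfl

@[simp]
lemma wordWeight_cons {α : Type*} (a : α) (k : ℕ) (L : List (α × ℕ)) :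
    wordWeight ((a, k) :: L) = k + wordWeight L := by
  simp [wordWeight]

section Filtration

variable {va : VertexAlgebra V} (M : VAModule va W)

lemma efilt_antitone : Antitone (Efilt M) := by
  intro m n h
  apply Submodule.span_mono
  rintro x ⟨L, w, hL, hs, rfl⟩
  exact ⟨L, w, hL, h.trans hs, rfl⟩

lemma mem_efilt_of_nonpos {n : ℤ} (hn : n ≤ 0) (w : W) : w ∈ Efilt M n :=
  Submodule.subset_span ⟨[(va.vac, 0)], w, by simp, by simpa using hn, by simp [M.vac_act]⟩

lemma efilt_le_comap_of_actWord {W' : Type*} [AddCommGroup W'] [Module ℂ W']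
    (f : W →ₗ[ℂ] W') {p : ℤ → Submodule ℂ W'} (hp : Antitone p)
    (h : ∀ L w, L ≠ [] → f (M.actWord L w) ∈ p (wordWeight L)) (s : ℤ) :
    Efilt M s ≤ (p s).comap f := by
  rw [Efilt, Submodule.span_le]
  rintro x ⟨L, w, hL, hs, rfl⟩
  exact hp hs (h L w hL)

lemma act_neg_mem_efilt (a : V) (k : ℕ) {t : ℤ} {y : W} (hy : y ∈ Efilt M t) :
    M.act a (-1 - (k : ℤ)) y ∈ Efilt M (t + k) := by
  refine efilt_le_comap_of_actWord M (M.act a (-1 - (k : ℤ)))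
    (p := fun t => Efilt M (t + k)) (fun _ _ h => efilt_antitone M (by omega)) ?_ t hy
  intro L w hL
  refine Submodule.subset_span ⟨(a, k) :: L, w, by simp, ?_, rfl⟩
  show _ ≤ wordWeight ((a, k) :: L)
  rw [wordWeight_cons]
  omega

lemma act_actWord_mem_efilt (L : List (V × ℕ)) (w : W) (a : V) (n : ℤ) :
    M.act a n (M.actWord L w) ∈ Efilt M (wordWeight L - filtDrop n) := by
  induction L generalizing a n with
  | nil =>
    rcases le_or_gt 0 n with hn | hn
    · exact mem_efilt_of_nonpos M (by simp [filtDrop, hn]) _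
    · have h := act_neg_mem_efilt M a (-1 - n).toNat (mem_efilt_of_nonpos M le_rfl w)
      rw [show -1 - (((-1 - n).toNat : ℕ) : ℤ) = n by omega] at h
      exact efilt_antitone M (by simp [filtDrop]; omega) h
  | cons p L ih =>
    obtain ⟨b, k⟩ := p
    rw [VAModule.actWord_cons, ← sub_add_cancel (M.act a n _) (M.act b _ _),
      M.commutator, wordWeight_cons]
    refine add_mem (finsum_induction _ (zero_mem _) (fun _ _ => add_mem) fun i => ?_) ?_
    · refine zsmul_mem (efilt_antitone M ?_ (ih _ _)) _
      simp only [filtDrop]; split_ifs <;> omega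
    · exact efilt_antitone M (by omega) (act_neg_mem_efilt M b k (ih a n))

lemma act_mem_efilt (a : V) (n : ℤ) {s : ℤ} {w : W} (hw : w ∈ Efilt M s) :
    M.act a n w ∈ Efilt M (s - filtDrop n) :=
  efilt_le_comap_of_actWord M (M.act a n) (p := fun s => Efilt M (s - filtDrop n))
    (fun _ _ h => efilt_antitone M (by omega)) (fun L w _ => act_actWord_mem_efilt M L w a n) s hw

lemma act_adjoint_actWord_mem_efilt (L : List (V × ℕ)) (v : V) {s : ℤ} {w : W}
    (hw : w ∈ Efilt M s) (n : ℤ) :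
    M.act (va.adjoint.actWord L v) n w ∈ Efilt M (wordWeight L + s - filtDrop n) := by
  induction L generalizing s w n with
  | nil => simpa using act_mem_efilt M v n hw
  | cons p L ih =>
    obtain ⟨a, k⟩ := p
    change M.act (va.Y a (-1 - (k : ℤ)) (va.adjoint.actWord L v)) n w ∈ _
    rw [M.iterate, wordWeight_cons]
    refine finsum_induction _ (zero_mem _) (fun _ _ => add_mem)
      fun i => zsmul_mem (sub_mem ?_ (zsmul_mem ?_ _)) _
    · rw [show -1 - (k : ℤ) - i = -1 - ((k + i : ℕ) : ℤ) by push_cast; ring]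
      refine efilt_antitone M ?_ (act_neg_mem_efilt M a (k + i) (ih hw (n + i)))
      push_cast; simp only [filtDrop]; split_ifs <;> omega
    · have h := ih (act_mem_efilt M a i hw) ((-1 - (k : ℤ)) + n - i)
      exact efilt_antitone M (by simp [filtDrop]; split_ifs <;> omega) h

lemma act_mem_efilt_add {r s : ℤ} {u : V} {w : W} (hu : u ∈ Efilt va.adjoint r)
    (hw : w ∈ Efilt M s) (n : ℤ) : M.act u n w ∈ Efilt M (r + s - filtDrop n) :=
  efilt_le_comap_of_actWord va.adjoint (LinearMap.applyₗ w ∘ₗ LinearMap.proj n ∘ₗ M.act)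
    (p := fun r => Efilt M (r + s - filtDrop n)) (fun _ _ h => efilt_antitone M (by omega))
    (fun L v _ => act_adjoint_actWord_mem_efilt M L v hw n) r hu

end Filtration

/-- **Proposition 2.12 (pbasic2).** Let `V` be a vertex algebra, `W` a `V`-module,
`u ∈ E_r(V)`, `w ∈ E_s(W)` with `r, s ∈ ℤ`. Then `u_n w ∈ E_{r+s-n-1}(W)` for all
`n ∈ ℤ`, and furthermore `u_n w ∈ E_{r+s-n}(W)` for all `n ≥ 0`. -/
theorem stmt3 {V : Type*} [AddCommGroup V] [Module ℂ V] {W : Type*} [AddCommGroup W]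
    [Module ℂ W] (va : VertexAlgebra V) (M : VAModule va W) (r s : ℤ) (u : V) (w : W)
    (hu : u ∈ Efilt va.adjoint r) (hw : w ∈ Efilt M s) :
    (∀ n : ℤ, M.act u n w ∈ Efilt M (r + s - n - 1)) ∧
    (∀ n : ℤ, 0 ≤ n → M.act u n w ∈ Efilt M (r + s - n)) := by
  refine ⟨fun n => efilt_antitone M ?_ (act_mem_efilt_add M hu hw n), fun n hn => ?_⟩
  · simp only [filtDrop]; split_ifs <;> omega
  · simpa [filtDrop, hn] using act_mem_efilt_add M hu hw n

end
end

section
/- For any vertex algebra V and any V-module W, one has E_1(W) = C_2(W) and E_2(W) = C_3(W). -/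
open scoped DirectSum

noncomputable section


variable {V : Type*} [AddCommGroup V] [Module ℂ V]

variable {W : Type*} [AddCommGroup W] [Module ℂ W]

/-!
The translation `T v = v₋₂𝟏` satisfies `(T v)₋₁₋ₖ = (k + 1) v₋₂₋ₖ`, so `v_n W ⊆ C_m(W)` whenever
`n ≤ -m`, and with the commutator formula each `C_m(W)`, `m ≥ 1`, is stable under every mode
`u_j` with `j ≤ 0`. Reading a monomial `u⁽¹⁾₋₁₋ₖ₁ ⋯ u⁽ʳ⁾₋₁₋ₖᵣ w` from the left, the factors with
`kᵢ = 0` can therefore be ignored, and the first factor with `kᵢ ≥ 1` already puts the monomial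
in `C₂(W)`. For `C₃(W)` the only case left is a factor `u₋₂` applied to an element of `C₂(W)`:
expanding `(u₋₁v)₋₃ w ∈ C₃(W)` by the iterate formula, every term except `u₋₂ v₋₂ w` visibly
lies in `C₃(W)`, hence so does `u₋₂ v₋₂ w`.
-/

lemma intBinom_neg_one (i : ℕ) : intBinom (-1) i = (-1) ^ i := by
  have h : ∏ j ∈ Finset.range i, ((-1 : ℤ) - j) = (-1) ^ i * i.factorial := by
    induction i with
    | zero => simp
    | succ n ih => rw [Finset.prod_range_succ, ih, Nat.factorial_succ]; push_cast; ring
  rw [intBinom, h, Int.mul_ediv_cancel _ (mod_cast Nat.factorial_ne_zero i)]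

lemma intBinom_neg_two (i : ℕ) : intBinom (-2) i = (-1) ^ i * (i + 1) := by
  have h : ∏ j ∈ Finset.range i, ((-2 : ℤ) - j) = (-1) ^ i * (i + 1) * i.factorial := by
    induction i with
    | zero => simp
    | succ n ih => rw [Finset.prod_range_succ, ih, Nat.factorial_succ]; push_cast; ring
  rw [intBinom, h, Int.mul_ediv_cancel _ (mod_cast Nat.factorial_ne_zero i)]

lemma mem_of_finsum_mem {ι G S : Type*} [AddCommGroup G] [SetLike S G] [AddSubgroupClass S G]
    {p : S} {f : ι → G} (hf : Function.HasFiniteSupport f) (a : ι)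
    (hsum : ∑ᶠ i, f i ∈ p) (h : ∀ i ≠ a, f i ∈ p) : f a ∈ p := by
  rw [← add_finsum_cond_ne a hf] at hsum
  refine (add_mem_cancel_right ?_).mp hsum
  exact finsum_induction (· ∈ p) (zero_mem p) (fun _ _ => add_mem) fun i =>
    finsum_induction (· ∈ p) (zero_mem p) (fun _ _ => add_mem) (h i)

namespace VAModule

variable {va : VertexAlgebra V} (M : VAModule va W)

theorem act_Y_neg_two_vac (v : V) (w : W) (k : ℕ) :
    M.act (va.Y v (-2) va.vac) (-1 - k) w = ((k : ℤ) + 1) • M.act v (-2 - k) w := by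
  have hvac : ∀ i : ℕ, (-2 + (-1 - k) - i : ℤ) ≠ -1 := by omega
  rw [M.iterate, finsum_eq_single _ k]
  · simp [M.vac_act, hvac, intBinom_neg_two, ← mul_assoc, ← mul_pow]
  · intro i hi
    have hik : (-1 - k + i : ℤ) ≠ -1 := by omega
    simp [M.vac_act, hik, hvac]

theorem act_Y_neg_one (u v : V) (w : W) (n : ℤ) :
    M.act (va.Y u (-1) v) n w
      = ∑ᶠ i : ℕ, (M.act u (-1 - i) (M.act v (n + i) w) + M.act v (-1 + n - i) (M.act u i w)) := by
  rw [M.iterate]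
  refine finsum_congr fun i => ?_
  have hsign : (((-1 : ℤˣ) ^ (-1 : ℤ) : ℤˣ) : ℤ) = -1 := by decide
  rw [intBinom_neg_one, ← mul_pow, hsign]
  simp

theorem act_mem_Cfilt {m : ℕ} (hm : 1 ≤ m) (v : V) (w : W) {n : ℤ} (hn : n ≤ -m) :
    M.act v n w ∈ Cfilt M m := by
  obtain ⟨k, rfl⟩ : ∃ k : ℕ, n = -m - k := ⟨(-m - n).toNat, by omega⟩
  clear hn
  induction k generalizing v with
  | zero => exact Submodule.subset_span ⟨v, w, by simp⟩
  | succ k ih =>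
    have hT := M.act_Y_neg_two_vac v w (m - 1 + k)
    have hidx : (-1 - ((m - 1 + k : ℕ) : ℤ)) = -m - k := by omega
    have hidx' : (-2 - ((m - 1 + k : ℕ) : ℤ)) = -m - (k + 1 : ℕ) := by omega
    have hc : ((((m - 1 + k : ℕ) : ℤ) + 1 : ℤ) : ℂ) ≠ 0 := by
      exact_mod_cast (m - 1 + k).succ_ne_zero
    have h := ih (va.Y v (-2) va.vac)
    rwa [← hidx, hT, hidx', ← Int.cast_smul_eq_zsmul ℂ, Submodule.smul_mem_iff _ hc] at h

theorem Cfilt_le_comap_act {m : ℕ} (hm : 1 ≤ m) (u : V) {j : ℤ} (hj : j ≤ 0) :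
    Cfilt M m ≤ (Cfilt M m).comap (M.act u j) := by
  refine Submodule.span_le.mpr ?_
  rintro _ ⟨v, w, rfl⟩
  rw [SetLike.mem_coe, Submodule.mem_comap]
  have hcomm := M.commutator u v w j (-m)
  refine (Submodule.sub_mem_iff_left _ (M.act_mem_Cfilt hm v (M.act u j w) le_rfl)).mp ?_
  rw [hcomm]
  exact finsum_induction (· ∈ Cfilt M m) (zero_mem _) (fun _ _ => add_mem) fun i =>
    Submodule.smul_of_tower_mem _ _ (M.act_mem_Cfilt hm _ w (by omega))

theorem act_neg_two_act_neg_two_mem_Cfilt_three (u v : V) (w : W) :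
    M.act u (-2) (M.act v (-2) w) ∈ Cfilt M 3 := by
  set F : ℕ → W := fun i =>
    M.act u (-1 - i) (M.act v (-3 + i) w) + M.act v (-1 + -3 - i) (M.act u i w) with hF
  have hfin : Function.HasFiniteSupport F := by
    obtain ⟨Nv, hNv⟩ := M.trunc v w
    obtain ⟨Nu, hNu⟩ := M.trunc u w
    refine (Set.finite_Iio (Nu + Nv + 3)).subset fun i hi => ?_
    by_contra hge
    simp only [Set.mem_Iio, not_lt] at hge
    exact hi (by simp [hF, hNv _ (by omega : (Nv : ℤ) ≤ -3 + i), hNu _ (by omega : (Nu : ℤ) ≤ i)])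
  have hsum : ∑ᶠ i, F i ∈ Cfilt M 3 := by
    rw [← M.act_Y_neg_one]
    exact M.act_mem_Cfilt (by norm_num) _ w (by norm_num)
  have hrest : ∀ i ≠ 1, F i ∈ Cfilt M 3 := by
    intro i hi
    refine add_mem ?_ (M.act_mem_Cfilt (by norm_num) v _ (by omega))
    rcases i with _ | _ | i
    · exact M.Cfilt_le_comap_act (by norm_num) u (by norm_num)
        (M.act_mem_Cfilt (by norm_num) v w (by norm_num))
    · exact absurd rfl hi
    · exact M.act_mem_Cfilt (by norm_num) u _ (by push_cast; omega)
  have hF1 : F 1 = M.act u (-2) (M.act v (-2) w) + M.act v (-5) (M.act u 1 w) := by norm_num [hF]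
  have hv5 : M.act v (-5) (M.act u 1 w) ∈ Cfilt M 3 :=
    M.act_mem_Cfilt (by norm_num) v _ (by norm_num)
  rw [← add_mem_cancel_right hv5, ← hF1]
  exact mem_of_finsum_mem hfin 1 hsum hrest

theorem Cfilt_two_le_comap_act_neg_two (u : V) :
    Cfilt M 2 ≤ (Cfilt M 3).comap (M.act u (-2)) := by
  refine Submodule.span_le.mpr ?_
  rintro _ ⟨v, w, rfl⟩
  exact M.act_neg_two_act_neg_two_mem_Cfilt_three u v w

def word (L : List (V × ℕ)) (w : W) : W :=
  L.foldr (fun p acc => M.act p.1 (-1 - (p.2 : ℤ)) acc) w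

theorem word_mem_Cfilt_two {L : List (V × ℕ)} (w : W) (hL : L ≠ [])
    (hdeg : 1 ≤ (L.map fun p => (p.2 : ℤ)).sum) : M.word L w ∈ Cfilt M 2 := by
  induction L with
  | nil => exact absurd rfl hL
  | cons p L ih =>
    obtain ⟨u, _ | k⟩ := p
    · have hdeg' : 1 ≤ (L.map fun p => (p.2 : ℤ)).sum := by simpa using hdeg
      have hL' : L ≠ [] := by rintro rfl; simp at hdeg'
      exact M.Cfilt_le_comap_act (by norm_num) u (by norm_num) (ih hL' hdeg')
    · exact M.act_mem_Cfilt (by norm_num) u _ (by push_cast; omega)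

theorem word_mem_Cfilt_three {L : List (V × ℕ)} (w : W) (hL : L ≠ [])
    (hdeg : 2 ≤ (L.map fun p => (p.2 : ℤ)).sum) : M.word L w ∈ Cfilt M 3 := by
  induction L with
  | nil => exact absurd rfl hL
  | cons p L ih =>
    obtain ⟨u, _ | _ | k⟩ := p
    · have hdeg' : 2 ≤ (L.map fun p => (p.2 : ℤ)).sum := by simpa using hdeg
      have hL' : L ≠ [] := by rintro rfl; simp at hdeg'
      exact M.Cfilt_le_comap_act (by norm_num) u (by norm_num) (ih hL' hdeg')
    · have hdeg' : 1 ≤ (L.map fun p => (p.2 : ℤ)).sum := by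
        simp only [List.map_cons, List.sum_cons] at hdeg; omega
      have hL' : L ≠ [] := by rintro rfl; simp at hdeg'
      exact M.Cfilt_two_le_comap_act_neg_two u (M.word_mem_Cfilt_two w hL' hdeg')
    · exact M.act_mem_Cfilt (by norm_num) u _ (by push_cast; omega)

theorem Cfilt_le_Efilt (k : ℕ) : Cfilt M (k + 1) ≤ Efilt M k := by
  refine Submodule.span_le.mpr ?_
  rintro _ ⟨v, w, rfl⟩
  refine Submodule.subset_span ⟨[(v, k)], w, List.cons_ne_nil _ _, by simp, ?_⟩
  simp only [List.foldr_cons, List.foldr_nil]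
  push_cast
  ring_nf

end VAModule

/-- **Corollary 3.6 (ce1e2).** For any vertex algebra `V` and any `V`-module `W`,
`E₁(W) = C₂(W)` and `E₂(W) = C₃(W)`. -/
theorem stmt10 {V : Type*} [AddCommGroup V] [Module ℂ V] {W : Type*} [AddCommGroup W]
    [Module ℂ W] (va : VertexAlgebra V) (M : VAModule va W) :
    Efilt M 1 = Cfilt M 2 ∧ Efilt M 2 = Cfilt M 3 := by
  refine ⟨le_antisymm ?_ (M.Cfilt_le_Efilt 1), le_antisymm ?_ (M.Cfilt_le_Efilt 2)⟩
  · refine Submodule.span_le.mpr ?_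
    rintro _ ⟨L, w, hL, hdeg, rfl⟩
    exact M.word_mem_Cfilt_two w hL hdeg
  · refine Submodule.span_le.mpr ?_
    rintro _ ⟨L, w, hL, hdeg, rfl⟩
    exact M.word_mem_Cfilt_three w hL hdeg
end
end
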